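/- arXiv:2412.10812 — 4 statements merged into one kernel-verified Lean document; each statement's English description precedes it below -/
import Mathlib

section
/- For every real μ ≥ 0, the quotient Ψ_μ(θ)/|θ|^((q+1)/q) tends to q/(q+1) as |θ| → ∞. -/
open Real Filter

noncomputable def g (s q μ ζ : ℝ) : ℝ := μ * |ζ| ^ (s - 1) * ζ + |ζ| ^ (q - 1) * ζ

/-!
Put `θ = g ζ` with `ζ = ψ θ`. Differentiating in `ζ` gives the area identity for inverse functions,
`Ψ (g ζ) = ζ g ζ - ∫₀^ζ g`, which for `ζ ≥ 0` is explicit: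
`Ψ (g ζ) = ζ g ζ - μ ζ^(s+1)/(s+1) - ζ^(q+1)/(q+1)`. Since `g ζ = ζ^q (1 + μ u)` with
`u = ζ^(s-q) → 0`, the quotient `Ψ (g ζ) / (g ζ)^((q+1)/q)` is a function of `u` continuous at
`0`, where it equals `q/(q+1)`. As `ψ` is odd, `Ψ` is even, so `θ → -∞` reduces to `θ → ∞`.
-/

open Set intervalIntegral

theorem integral_inverse_eq_of_hasDerivAt {ψ f f' F : ℝ → ℝ} {a b : ℝ} (hab : a ≤ b)
    (hψ : Continuous ψ) (hf : ContinuousOn f (Icc a b)) (hF : ContinuousOn F (Icc a b))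
    (hf' : ∀ x ∈ Ioo a b, HasDerivAt f (f' x) x) (hF' : ∀ x ∈ Ioo a b, HasDerivAt F (f x) x)
    (hψf : ∀ x ∈ Ioo a b, ψ (f x) = x) :
    ∫ t in f a..f b, ψ t = b * f b - a * f a - (F b - F a) := by
  set H : ℝ → ℝ := fun x ↦ (∫ t in 0..f x, ψ t) - x * f x + F x
  have hH : ContinuousOn H (Icc a b) :=
    (((continuous_primitive (fun _ _ ↦ hψ.intervalIntegrable _ _) 0).comp_continuousOn hf).sub
      (continuousOn_id.mul hf)).add hF
  have hH' : ∀ x ∈ Ioo a b, HasDerivAt H 0 x := by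
    intro x hx
    have hΨ := (hψ.integral_hasStrictDerivAt 0 (f x)).hasDerivAt.comp x (hf' x hx)
    rw [hψf x hx] at hΨ
    exact ((hΨ.sub ((hasDerivAt_id x).mul (hf' x hx))).add (hF' x hx)).congr_deriv (by simp)
  have hHab : H b = H a := by
    rcases hab.eq_or_lt with rfl | hlt
    · rfl
    obtain ⟨c, -, hc⟩ := exists_hasDerivAt_eq_slope H (fun _ ↦ 0) hlt hH hH'
    rw [eq_comm, div_eq_zero_iff, sub_eq_zero] at hc
    exact hc.resolve_right (sub_ne_zero.2 hlt.ne')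
  rw [← integral_interval_sub_left (hψ.intervalIntegrable _ _) (hψ.intervalIntegrable _ _)]
  simp only [H] at hHab
  linarith

theorem integral_zero_neg_of_odd {f : ℝ → ℝ} (hf : ∀ x, f (-x) = -f x) (θ : ℝ) :
    ∫ t in (0 : ℝ)..-θ, f t = ∫ t in (0 : ℝ)..θ, f t := by
  have h := integral_comp_neg (a := 0) (b := θ) f
  simp only [hf, intervalIntegral.integral_neg, neg_zero] at h
  rw [integral_symm 0 (-θ)] at h
  linarith

theorem tendsto_cocompact_of_even {α : Type*} {f : ℝ → α} {l : Filter α}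
    (hf : ∀ x, f (-x) = f x) (h : Tendsto f atTop l) : Tendsto f (cocompact ℝ) l := by
  rw [cocompact_eq_atBot_atTop, tendsto_sup]
  refine ⟨?_, h⟩
  have := h.comp tendsto_neg_atBot_atTop
  simpa [Function.comp_def, hf] using this

theorem g_neg (s q μ ζ : ℝ) : g s q μ (-ζ) = -g s q μ ζ := by
  simp only [g, abs_neg]; ring

theorem abs_rpow_sub_one_mul_self {r x : ℝ} (hr : 0 < r) (hx : 0 ≤ x) :
    |x| ^ (r - 1) * x = x ^ r := by
  rcases hx.eq_or_lt with rfl | hx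
  · simp [zero_rpow hr.ne']
  · rw [abs_of_pos hx, ← rpow_add_one hx.ne', sub_add_cancel]

section

variable {s q μ : ℝ}

theorem g_of_nonneg (hs : 0 < s) (hq : 0 < q) {ζ : ℝ} (hζ : 0 ≤ ζ) :
    g s q μ ζ = μ * ζ ^ s + ζ ^ q := by
  rw [g, mul_assoc, abs_rpow_sub_one_mul_self hs hζ, abs_rpow_sub_one_mul_self hq hζ]

theorem g_strictMono (hs : 0 < s) (hq : 0 < q) (hμ : 0 ≤ μ) : StrictMono (g s q μ) := by
  refine strictMono_of_odd_strictMonoOn_nonneg (g_neg s q μ) fun x hx y hy hxy ↦ ?_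
  rw [g_of_nonneg hs hq hx, g_of_nonneg hs hq hy]
  exact add_lt_add_of_le_of_lt
    (mul_le_mul_of_nonneg_left (monotoneOn_rpow_Ici_of_exponent_nonneg hs.le hx hy hxy.le) hμ)
    (strictMonoOn_rpow_Ici_of_exponent_pos hq hx hy hxy)

theorem g_eq_rpow_mul (hs : 0 < s) (hq : 0 < q) {ζ : ℝ} (hζ : 0 < ζ) :
    g s q μ ζ = ζ ^ q * (1 + μ * ζ ^ (s - q)) := by
  rw [g_of_nonneg hs hq hζ.le, mul_one_add, mul_left_comm, ← rpow_add hζ, add_sub_cancel,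
    add_comm]

theorem integral_inverse_g {ψ : ℝ → ℝ} (hs : 0 < s) (hq : 0 < q) (hψ : Continuous ψ)
    (hψg : ∀ ζ, ψ (g s q μ ζ) = ζ) {ζ : ℝ} (hζ : 0 ≤ ζ) :
    ∫ t in (0 : ℝ)..g s q μ ζ, ψ t =
      ζ * g s q μ ζ - (μ * ζ ^ (s + 1) / (s + 1) + ζ ^ (q + 1) / (q + 1)) := by
  have hf' (x : ℝ) (hx : x ∈ Ioo 0 ζ) :
      HasDerivAt (fun x ↦ μ * x ^ s + x ^ q) (μ * (s * x ^ (s - 1)) + q * x ^ (q - 1)) x :=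
    ((hasDerivAt_rpow_const (Or.inl hx.1.ne')).const_mul μ).add
      (hasDerivAt_rpow_const (Or.inl hx.1.ne'))
  have hF' (x : ℝ) (hx : x ∈ Ioo 0 ζ) :
      HasDerivAt (fun x ↦ μ * x ^ (s + 1) / (s + 1) + x ^ (q + 1) / (q + 1))
        (μ * x ^ s + x ^ q) x := by
    refine ((((hasDerivAt_rpow_const (Or.inl hx.1.ne')).const_mul μ).div_const (s + 1)).add
      ((hasDerivAt_rpow_const (Or.inl hx.1.ne')).div_const (q + 1))).congr_deriv ?_
    simp only [add_sub_cancel_right]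
    field_simp
  have hψf (x : ℝ) (hx : x ∈ Ioo 0 ζ) : ψ (μ * x ^ s + x ^ q) = x := by
    rw [← g_of_nonneg hs hq hx.1.le, hψg]
  have key := integral_inverse_eq_of_hasDerivAt hζ hψ (by fun_prop (disch := positivity))
    (by fun_prop (disch := positivity)) hf' hF' hψf
  simp only [zero_rpow hs.ne', zero_rpow hq.ne', zero_rpow (by positivity : s + 1 ≠ 0),
    zero_rpow (by positivity : q + 1 ≠ 0), mul_zero, zero_div, add_zero, sub_zero] at key
  rwa [g_of_nonneg hs hq hζ]

theorem integral_inverse_g_div_rpow {ψ : ℝ → ℝ} (hs : 0 < s) (hq : 0 < q) (hμ : 0 ≤ μ)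
    (hψ : Continuous ψ) (hψg : ∀ ζ, ψ (g s q μ ζ) = ζ) {ζ : ℝ} (hζ : 0 < ζ) :
    (∫ t in (0 : ℝ)..g s q μ ζ, ψ t) / g s q μ ζ ^ ((q + 1) / q) =
      (1 + μ * ζ ^ (s - q) - μ * ζ ^ (s - q) / (s + 1) - 1 / (q + 1)) /
        (1 + μ * ζ ^ (s - q)) ^ ((q + 1) / q) := by
  have hs' : ζ ^ (s + 1) = ζ ^ (q + 1) * ζ ^ (s - q) := by
    rw [← rpow_add hζ]; ring_nf
  have hnum : ζ * (ζ ^ q * (1 + μ * ζ ^ (s - q))) -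
      (μ * ζ ^ (s + 1) / (s + 1) + ζ ^ (q + 1) / (q + 1)) =
      ζ ^ (q + 1) * (1 + μ * ζ ^ (s - q) - μ * ζ ^ (s - q) / (s + 1) - 1 / (q + 1)) := by
    rw [hs', rpow_add_one hζ.ne']; ring
  have hden : (ζ ^ q * (1 + μ * ζ ^ (s - q))) ^ ((q + 1) / q) =
      ζ ^ (q + 1) * (1 + μ * ζ ^ (s - q)) ^ ((q + 1) / q) := by
    rw [mul_rpow (by positivity) (by positivity), ← rpow_mul hζ.le, mul_div_cancel₀ _ hq.ne']
  rw [integral_inverse_g hs hq hψ hψg hζ.le, g_eq_rpow_mul hs hq hζ, hnum, hden,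
    mul_div_mul_left _ _ (by positivity)]

theorem tendsto_integral_inverse_g_div_rpow {ψ : ℝ → ℝ} (hs : 0 < s) (hsq : s < q) (hμ : 0 ≤ μ)
    (hψ : Continuous ψ) (hψg : ∀ ζ, ψ (g s q μ ζ) = ζ) :
    Tendsto (fun ζ ↦ (∫ t in (0 : ℝ)..g s q μ ζ, ψ t) / g s q μ ζ ^ ((q + 1) / q)) atTop
      (nhds (q / (q + 1))) := by
  have hq : 0 < q := hs.trans hsq
  set φ : ℝ → ℝ := fun u ↦
    (1 + μ * u - μ * u / (s + 1) - 1 / (q + 1)) / (1 + μ * u) ^ ((q + 1) / q)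
  have hφ : ContinuousAt φ 0 := by fun_prop (disch := simp)
  have hφ0 : φ 0 = q / (q + 1) := by
    simp only [φ, mul_zero, zero_div, add_zero, sub_zero, one_rpow, div_one]
    field_simp
    ring
  have hu : Tendsto (fun ζ : ℝ ↦ ζ ^ (s - q)) atTop (nhds 0) := by
    simpa only [neg_sub] using tendsto_rpow_neg_atTop (sub_pos.2 hsq)
  rw [← hφ0]
  refine (hφ.tendsto.comp hu).congr' ?_
  filter_upwards [eventually_gt_atTop 0] with ζ hζ
  exact (integral_inverse_g_div_rpow hs hq hμ hψ hψg hζ).symm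

end

theorem stmt_8_general (s q : ℝ) (hs : 0 < s) (hsq : s < q) (μ : ℝ) (hμ : 0 ≤ μ)
    (ψ : ℝ → ℝ)
    (hψ_right : ∀ θ : ℝ, g s q μ (ψ θ) = θ)
    (Ψ : ℝ → ℝ)
    (hΨ : ∀ θ : ℝ, Ψ θ = ∫ t in (0 : ℝ)..θ, ψ t) :
    Tendsto (fun θ : ℝ => Ψ θ / |θ| ^ ((q + 1) / q)) (cocompact ℝ)
      (nhds (q / (q + 1))) := by
  let e := (g_strictMono hs (hs.trans hsq) hμ).orderIsoOfRightInverse _ ψ hψ_right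
  have he : ⇑e.symm = ψ := rfl
  have hψg : ∀ ζ, ψ (g s q μ ζ) = ζ := e.symm_apply_apply
  have hψ_odd (θ : ℝ) : ψ (-θ) = -ψ θ := by
    rw [← hψ_right θ, ← g_neg, hψg, hψg]
  refine tendsto_cocompact_of_even
    (fun θ ↦ by rw [hΨ, hΨ, integral_zero_neg_of_odd hψ_odd, abs_neg]) ?_
  refine ((tendsto_integral_inverse_g_div_rpow hs hsq hμ e.symm.continuous hψg).comp
    e.symm.tendsto_atTop).congr' ?_
  filter_upwards [eventually_gt_atTop 0] with θ hθ
  simp only [Function.comp_apply, he, hψ_right, hΨ, abs_of_pos hθ]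

theorem stmt_8 (s q : ℝ) (hs : 0 < s) (hsq : s < q) (μ : ℝ) (hμ : 0 ≤ μ)
    (ψ : ℝ → ℝ)
    (hψ_right : ∀ θ : ℝ, g s q μ (ψ θ) = θ)
    (hψ_left : ∀ ζ : ℝ, ψ (g s q μ ζ) = ζ)
    (Ψ : ℝ → ℝ)
    (hΨ : ∀ θ : ℝ, Ψ θ = ∫ t in (0 : ℝ)..θ, ψ t) :
    Tendsto (fun θ : ℝ => Ψ θ / |θ| ^ ((q + 1) / q)) (cocompact ℝ)
      (nhds (q / (q + 1))) :=
  stmt_8_general s q hs hsq μ hμ ψ hψ_right Ψ hΨ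
end

section
/- For every real μ ≥ 0 and every θ ∈ ℝ, one has (q/(q+1))·ψ_μ(θ)·θ ≥ Ψ_μ(θ) ≥ (s/(s+1))·ψ_μ(θ)·θ. -/
open Real

lemma g_odd (s q μ ζ : ℝ) : g s q μ (-ζ) = - g s q μ ζ := by
  simp only [g, abs_neg]; ring

lemma g_zero (s q μ : ℝ) : g s q μ 0 = 0 := by simp [g]

lemma g_nonneg_eq (s q μ : ℝ) (hs : 0 < s) (hq : 0 < q) {ζ : ℝ} (hζ : 0 ≤ ζ) :
    g s q μ ζ = μ * ζ ^ s + ζ ^ q := by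
  rcases eq_or_lt_of_le hζ with h | h
  · simp [g, ← h, Real.zero_rpow hs.ne', Real.zero_rpow hq.ne']
  · have h1 : ζ ^ (s - 1) * ζ = ζ ^ s := by
      conv_rhs => rw [show s = s - 1 + 1 by ring]
      rw [Real.rpow_add_one h.ne']
    have h2 : ζ ^ (q - 1) * ζ = ζ ^ q := by
      conv_rhs => rw [show q = q - 1 + 1 by ring]
      rw [Real.rpow_add_one h.ne']
    rw [g, abs_of_pos h, mul_assoc, h1, h2]

lemma g_mono (s q μ : ℝ) (hs : 0 < s) (hq : 0 < q) (hμ : 0 ≤ μ) :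
    StrictMono (g s q μ) := by
  have key : ∀ a b : ℝ, 0 ≤ a → a < b → g s q μ a < g s q μ b := by
    intro a b ha hab
    rw [g_nonneg_eq s q μ hs hq ha, g_nonneg_eq s q μ hs hq (ha.trans hab.le)]
    have h1 : μ * a ^ s ≤ μ * b ^ s :=
      mul_le_mul_of_nonneg_left (Real.rpow_le_rpow ha hab.le hs.le) hμ
    have h2 : a ^ q < b ^ q := Real.rpow_lt_rpow ha hab hq
    linarith
  intro a b hab
  rcases le_or_gt 0 a with ha | ha
  · exact key a b ha hab
  rcases le_or_gt b 0 with hb | hb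
  · have := key (-b) (-a) (by linarith) (by linarith)
    rw [g_odd, g_odd] at this
    linarith
  · have h1 : g s q μ a < 0 := by
      have := key 0 (-a) le_rfl (by linarith)
      rw [g_zero, g_odd] at this
      linarith
    have h2 : 0 < g s q μ b := by
      have := key 0 b le_rfl hb
      rwa [g_zero] at this
    linarith

theorem stmt_12 (s q : ℝ) (hs : 0 < s) (hsq : s < q) (μ : ℝ) (hμ : 0 ≤ μ)
    (ψ : ℝ → ℝ)
    (hψ_right : ∀ θ : ℝ, g s q μ (ψ θ) = θ)
    (hψ_left : ∀ ζ : ℝ, ψ (g s q μ ζ) = ζ)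
    (Ψ : ℝ → ℝ)
    (hΨ : ∀ θ : ℝ, Ψ θ = ∫ t in (0 : ℝ)..θ, ψ t) :
    ∀ θ : ℝ, (q / (q + 1)) * (ψ θ * θ) ≥ Ψ θ ∧ Ψ θ ≥ (s / (s + 1)) * (ψ θ * θ) := by
  have hq : 0 < q := hs.trans hsq
  have hgm : StrictMono (g s q μ) := g_mono s q μ hs hq hμ
  have hψm : StrictMono ψ := by
    intro a b hab
    rw [← (hgm).lt_iff_lt, hψ_right, hψ_right]
    exact hab
  have hψ0 : ψ 0 = 0 := by
    have := hψ_left 0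
    rwa [g_zero] at this
  have hψodd : ∀ t : ℝ, ψ (-t) = - ψ t := by
    intro t
    have : ψ (g s q μ (-ψ t)) = -ψ t := hψ_left _
    rwa [g_odd, hψ_right] at this
  -- Main computation for θ > 0
  have main : ∀ θ : ℝ, 0 < θ →
      (s / (s + 1)) * (ψ θ * θ) ≤ (∫ t in (0 : ℝ)..θ, ψ t) ∧
      (∫ t in (0 : ℝ)..θ, ψ t) ≤ (q / (q + 1)) * (ψ θ * θ) := by
    intro θ hθ
    set x := ψ θ with hx
    have hxpos : 0 < x := by
      rw [hx, ← hψ0]; exact hψm hθ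
    have hgx : μ * x ^ s + x ^ q = θ := by
      rw [← g_nonneg_eq s q μ hs hq hxpos.le, hψ_right]
    -- pointwise bounds on [0, θ]
    have hub : ∀ t ∈ Set.Icc (0 : ℝ) θ, ψ t ≤ x * (1/θ) ^ (1/q) * t ^ (1/q) := by
      intro t ht
      obtain ⟨ht0, htθ⟩ := ht
      rcases eq_or_lt_of_le ht0 with h0 | h0
      · rw [← h0, hψ0, Real.zero_rpow (by positivity), mul_zero]
      set r : ℝ := t / θ with hr
      have hr0 : 0 < r := div_pos h0 hθ
      have hr1 : r ≤ 1 := (div_le_one hθ).mpr htθ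
      have hrw : x * (1/θ) ^ (1/q) * t ^ (1/q) = x * r ^ (1/q) := by
        rw [mul_assoc, ← Real.mul_rpow (by positivity) ht0, hr]
        ring_nf
      rw [hrw]
      set y : ℝ := x * r ^ (1/q) with hy
      have hy0 : 0 ≤ y := by positivity
      have hgy : g s q μ y = μ * x ^ s * r ^ (s/q) + x ^ q * r := by
        rw [g_nonneg_eq s q μ hs hq hy0, hy,
          Real.mul_rpow hxpos.le (by positivity),
          Real.mul_rpow hxpos.le (by positivity),
          ← Real.rpow_mul hr0.le, ← Real.rpow_mul hr0.le]
        rw [show 1/q*q = 1 by field_simp, show 1/q*s = s/q by ring, Real.rpow_one]; ring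
      have hrs : r ≤ r ^ (s/q) := by
        nth_rewrite 1 [← Real.rpow_one r]
        exact Real.rpow_le_rpow_of_exponent_ge hr0 hr1
          (by rw [div_le_one hq]; exact hsq.le)
      have htle : t ≤ g s q μ y := by
        rw [hgy]
        have ht' : t = (μ * x ^ s + x ^ q) * r := by
          rw [hgx, hr]; field_simp
        have : μ * x ^ s * r ≤ μ * x ^ s * r ^ (s/q) := by
          apply mul_le_mul_of_nonneg_left hrs (by positivity)
        nlinarith
      have := hψm.monotone htle
      rwa [hψ_left] at this
    have hlb : ∀ t ∈ Set.Icc (0 : ℝ) θ, x * (1/θ) ^ (1/s) * t ^ (1/s) ≤ ψ t := by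
      intro t ht
      obtain ⟨ht0, htθ⟩ := ht
      rcases eq_or_lt_of_le ht0 with h0 | h0
      · rw [← h0, hψ0, Real.zero_rpow (by positivity), mul_zero]
      set r : ℝ := t / θ with hr
      have hr0 : 0 < r := div_pos h0 hθ
      have hr1 : r ≤ 1 := (div_le_one hθ).mpr htθ
      have hrw : x * (1/θ) ^ (1/s) * t ^ (1/s) = x * r ^ (1/s) := by
        rw [mul_assoc, ← Real.mul_rpow (by positivity) ht0, hr]
        ring_nf
      rw [hrw]
      set y : ℝ := x * r ^ (1/s) with hy
      have hy0 : 0 ≤ y := by positivity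
      have hgy : g s q μ y = μ * x ^ s * r + x ^ q * r ^ (q/s) := by
        rw [g_nonneg_eq s q μ hs hq hy0, hy,
          Real.mul_rpow hxpos.le (by positivity),
          Real.mul_rpow hxpos.le (by positivity),
          ← Real.rpow_mul hr0.le, ← Real.rpow_mul hr0.le]
        rw [show 1/s*s = 1 by field_simp, show 1/s*q = q/s by ring, Real.rpow_one]; ring
      have hrq : r ^ (q/s) ≤ r := by
        nth_rewrite 2 [← Real.rpow_one r]
        exact Real.rpow_le_rpow_of_exponent_ge hr0 hr1
          (by rw [le_div_iff₀ hs]; linarith)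
      have htge : g s q μ y ≤ t := by
        rw [hgy]
        have ht' : t = (μ * x ^ s + x ^ q) * r := by
          rw [hgx, hr]; field_simp
        have : x ^ q * r ^ (q/s) ≤ x ^ q * r := by
          apply mul_le_mul_of_nonneg_left hrq (by positivity)
        nlinarith
      have := hψm.monotone htge
      rwa [hψ_left] at this
    -- integrability
    have hint : IntervalIntegrable ψ MeasureTheory.volume 0 θ :=
      hψm.monotone.intervalIntegrable
    have hintq : IntervalIntegrable (fun t => x * (1/θ) ^ (1/q) * t ^ (1/q))
        MeasureTheory.volume 0 θ :=
      (intervalIntegral.intervalIntegrable_rpow' (lt_of_lt_of_le (show (-1:ℝ) < 0 by norm_num) (by positivity))).const_mul _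
    have hints : IntervalIntegrable (fun t => x * (1/θ) ^ (1/s) * t ^ (1/s))
        MeasureTheory.volume 0 θ :=
      (intervalIntegral.intervalIntegrable_rpow' (lt_of_lt_of_le (show (-1:ℝ) < 0 by norm_num) (by positivity))).const_mul _
    have hcomp : ∀ p : ℝ, 0 < p →
        (∫ t in (0:ℝ)..θ, x * (1/θ) ^ (1/p) * t ^ (1/p)) = (p / (p + 1)) * (x * θ) := by
      intro p hp
      rw [intervalIntegral.integral_const_mul, integral_rpow (Or.inl (lt_of_lt_of_le (show (-1:ℝ) < 0 by norm_num) (by positivity)))]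
      rw [Real.zero_rpow (by positivity), sub_zero]
      have h1 : (1/θ : ℝ) ^ (1/p) = (θ ^ (1/p))⁻¹ := by
        rw [one_div, Real.inv_rpow hθ.le]
      have h2 : θ ^ (1/p + 1) = θ ^ (1/p) * θ := Real.rpow_add_one hθ.ne' _
      rw [h1, h2]
      have hθp : (0:ℝ) < θ ^ (1/p) := Real.rpow_pos_of_pos hθ _
      field_simp
      ring
    constructor
    · have := intervalIntegral.integral_mono_on hθ.le hints hint hlb
      rw [hcomp s hs] at this
      linarith
    · have := intervalIntegral.integral_mono_on hθ.le hint hintq hub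
      rw [hcomp q hq] at this
      linarith
  intro θ
  rcases lt_trichotomy θ 0 with hθ | hθ | hθ
  · have h1 := main (-θ) (by linarith)
    have hflip : (∫ t in (0:ℝ)..θ, ψ t) = ∫ t in (0:ℝ)..(-θ), ψ t := by
      have h2 : (∫ t in (0:ℝ)..θ, ψ (-t)) = ∫ t in (-θ)..(0:ℝ), ψ t := by
        have := intervalIntegral.integral_comp_neg (a := (0:ℝ)) (b := θ) (f := ψ)
        simpa only [neg_zero] using this
      have h3 : (∫ t in (0:ℝ)..θ, ψ (-t)) = - ∫ t in (0:ℝ)..θ, ψ t := by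
        simp_rw [hψodd]
        rw [intervalIntegral.integral_neg]
      have h4 : (∫ t in (-θ)..(0:ℝ), ψ t) = - ∫ t in (0:ℝ)..(-θ), ψ t :=
        intervalIntegral.integral_symm 0 (-θ)
      rw [h3, h4] at h2
      linarith
    have hprod : ψ (-θ) * (-θ) = ψ θ * θ := by
      rw [hψodd]; ring
    rw [hΨ, hflip]
    rw [hprod] at h1
    exact ⟨h1.2, h1.1⟩
  · subst hθ
    rw [hΨ]
    simp [hψ0]
  · have h1 := main θ hθ
    rw [hΨ]
    exact ⟨h1.2, h1.1⟩
end

section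
/- Assume in addition 0 < s < 1 < q and let μ > 0. Set θ_μ = C_{q,s}·μ^(q/(q−s)) where C_{q,s} = [s(1−s)/(q(q−s))]^(s/(q−s)) + [s(1−s)/(q(q−s))]^(q/(q−s)), and set Ĉ = (1 + q(q−s)/(s(1−s)))^(−1/q) and ĉ = (1 + s(1−s)/(q(q−s)))^(−1/s). Then for every θ ∈ ℝ one has |θ|^((q+1)/q) ≥ ψ_μ(θ)·θ; moreover ψ_μ(θ)·θ ≥ Ĉ·|θ|^((q+1)/q) whenever |θ| ≥ θ_μ, and ψ_μ(θ)·θ ≥ μ^(−1/s)·ĉ·|θ|^((s+1)/s) whenever |θ| ≤ θ_μ. -/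
/-! Since `g ζ = c ζ` with `c ≥ 0`, one has `ζ · g ζ = |ζ| · |g ζ|` and
`|g ζ| = μ |ζ|^s + |ζ|^q`; so with `ζ = |ψ θ|` everything reduces to `|θ| = μ ζ^s + ζ^q`.
The first bound is `ζ ≤ |θ|^(1/q)`. The threshold `θ_μ` is the value of `μ ζ^s + ζ^q` at the
crossover point `(A μ)^(1/(q-s))`, `A = s(1-s)/(q(q-s))`, where `ζ^q = A μ ζ^s`. By monotonicity,
above it `|θ| ≤ (1 + A⁻¹) ζ^q` and below it `|θ| ≤ (1 + A) μ ζ^s`; taking `q`-th resp. `s`-th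
roots gives the other two bounds. -/

open Real

open Set

lemma g_eq_mul_self (s q μ ζ : ℝ) :
    g s q μ ζ = (μ * |ζ| ^ (s - 1) + |ζ| ^ (q - 1)) * ζ := by
  unfold g; ring

lemma abs_g {s q μ : ℝ} (hs : 0 < s) (hq : 0 < q) (hμ : 0 ≤ μ) (ζ : ℝ) :
    |g s q μ ζ| = μ * |ζ| ^ s + |ζ| ^ q := by
  rcases eq_or_ne ζ 0 with rfl | hζ
  · simp [g, Real.zero_rpow hs.ne', Real.zero_rpow hq.ne']
  have hζ' : |ζ| ≠ 0 := abs_ne_zero.mpr hζ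
  rw [g_eq_mul_self, abs_mul, abs_of_nonneg (by positivity), Real.rpow_sub_one hζ',
    Real.rpow_sub_one hζ']
  field_simp

lemma mul_g_eq_abs_mul_abs {s q μ : ℝ} (hμ : 0 ≤ μ) (ζ : ℝ) :
    ζ * g s q μ ζ = |ζ| * |g s q μ ζ| := by
  have hc : 0 ≤ μ * |ζ| ^ (s - 1) + |ζ| ^ (q - 1) := by positivity
  rw [g_eq_mul_self, abs_mul, abs_of_nonneg hc]
  linear_combination -(μ * |ζ| ^ (s - 1) + |ζ| ^ (q - 1)) * abs_mul_abs_self ζ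

section Crossover

variable {s q μ A : ℝ}

lemma strictMonoOn_mul_rpow_add_rpow (hs : 0 < s) (hq : 0 < q) (hμ : 0 ≤ μ) :
    StrictMonoOn (fun ζ : ℝ => μ * ζ ^ s + ζ ^ q) (Ici 0) := by
  intro a ha b _ hab
  have h_s := Real.rpow_le_rpow ha hab.le hs.le
  have h_q := Real.rpow_lt_rpow ha hab hq
  dsimp only
  nlinarith [mul_le_mul_of_nonneg_left h_s hμ]

lemma mul_rpow_add_rpow_crossover (hsq : s < q) (hA : 0 < A) (hμ : 0 < μ) :
    μ * ((A * μ) ^ (q - s)⁻¹) ^ s + ((A * μ) ^ (q - s)⁻¹) ^ q =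
      (A ^ (s / (q - s)) + A ^ (q / (q - s))) * μ ^ (q / (q - s)) := by
  have hqs : q - s ≠ 0 := (sub_pos.mpr hsq).ne'
  have hμpow : μ ^ (q / (q - s)) = μ * μ ^ (s / (q - s)) := by
    rw [show q / (q - s) = 1 + s / (q - s) by field_simp; ring, Real.rpow_add hμ, Real.rpow_one]
  rw [← Real.rpow_mul (mul_pos hA hμ).le, ← Real.rpow_mul (mul_pos hA hμ).le,
    Real.mul_rpow hA.le hμ.le, Real.mul_rpow hA.le hμ.le, inv_mul_eq_div, inv_mul_eq_div, hμpow]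
  ring

lemma crossover_rpow_sub (hsq : s < q) (hA : 0 < A) (hμ : 0 < μ) :
    ((A * μ) ^ (q - s)⁻¹) ^ (q - s) = A * μ :=
  Real.rpow_inv_rpow (mul_pos hA hμ).le (sub_pos.mpr hsq).ne'

lemma rpow_eq_rpow_sub_mul_rpow {ζ : ℝ} (hq : q ≠ 0) (hζ : 0 ≤ ζ) :
    ζ ^ q = ζ ^ (q - s) * ζ ^ s := by
  rw [← Real.rpow_add' hζ (by rwa [sub_add_cancel]), sub_add_cancel]

lemma mul_mul_rpow_le_rpow_of_threshold_le (hs : 0 < s) (hsq : s < q) (hA : 0 < A) (hμ : 0 < μ)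
    {ζ : ℝ} (hζ : 0 ≤ ζ)
    (h : (A ^ (s / (q - s)) + A ^ (q / (q - s))) * μ ^ (q / (q - s)) ≤ μ * ζ ^ s + ζ ^ q) :
    A * μ * ζ ^ s ≤ ζ ^ q := by
  have hζ₀ : (A * μ) ^ (q - s)⁻¹ ≤ ζ := by
    rwa [← mul_rpow_add_rpow_crossover hsq hA hμ,
      (strictMonoOn_mul_rpow_add_rpow hs (hs.trans hsq) hμ.le).le_iff_le (mem_Ici.mpr (by positivity)) hζ] at h
  rw [rpow_eq_rpow_sub_mul_rpow (hs.trans hsq).ne' hζ, ← crossover_rpow_sub hsq hA hμ]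
  gcongr

lemma rpow_le_mul_mul_rpow_of_le_threshold (hs : 0 < s) (hsq : s < q) (hA : 0 < A) (hμ : 0 < μ)
    {ζ : ℝ} (hζ : 0 ≤ ζ)
    (h : μ * ζ ^ s + ζ ^ q ≤ (A ^ (s / (q - s)) + A ^ (q / (q - s))) * μ ^ (q / (q - s))) :
    ζ ^ q ≤ A * μ * ζ ^ s := by
  have hζ₀ : ζ ≤ (A * μ) ^ (q - s)⁻¹ := by
    rwa [← mul_rpow_add_rpow_crossover hsq hA hμ,
      (strictMonoOn_mul_rpow_add_rpow hs (hs.trans hsq) hμ.le).le_iff_le hζ (mem_Ici.mpr (by positivity))] at h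
  rw [rpow_eq_rpow_sub_mul_rpow (hs.trans hsq).ne' hζ, ← crossover_rpow_sub hsq hA hμ]
  gcongr

end Crossover

section PowerBounds

variable {p c ζ θ : ℝ}

lemma rpow_add_one_div_self (hp : 0 < p) (hθ : 0 ≤ θ) :
    θ ^ ((p + 1) / p) = θ ^ p⁻¹ * θ := by
  rw [show (p + 1) / p = p⁻¹ + 1 by field_simp; ring, Real.rpow_add_one' hθ (by positivity)]

lemma mul_le_rpow_of_rpow_le (hp : 0 < p) (hζ : 0 ≤ ζ) (h : ζ ^ p ≤ θ) :
    ζ * θ ≤ θ ^ ((p + 1) / p) := by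
  have hθ : 0 ≤ θ := (Real.rpow_nonneg hζ p).trans h
  rw [rpow_add_one_div_self hp hθ]
  gcongr
  exact (Real.le_rpow_inv_iff_of_pos hζ hθ hp).mpr h

lemma rpow_mul_le_mul_of_le_mul_rpow (hp : 0 < p) (hc : 0 < c) (hζ : 0 ≤ ζ) (hθ : 0 ≤ θ)
    (h : θ ≤ c * ζ ^ p) :
    c ^ (-p⁻¹) * θ ^ ((p + 1) / p) ≤ ζ * θ := by
  have hθc : c⁻¹ * θ ≤ ζ ^ p := by rwa [inv_mul_le_iff₀ hc]
  have hroot : (c⁻¹ * θ) ^ p⁻¹ ≤ ζ := by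
    rwa [Real.rpow_inv_le_iff_of_pos (by positivity) hζ hp]
  rw [rpow_add_one_div_self hp hθ, ← mul_assoc, Real.rpow_neg hc.le, ← Real.inv_rpow hc.le,
    ← Real.mul_rpow (by positivity) hθ]
  gcongr

end PowerBounds

theorem stmt_14_general (s q : ℝ) (hs : 0 < s) (hs1 : s < 1) (hq : 1 < q)
    (μ : ℝ) (hμ : 0 < μ)
    (ψ : ℝ → ℝ)
    (hψ_right : ∀ θ : ℝ, g s q μ (ψ θ) = θ) :
    ∀ θ : ℝ,
      |θ| ^ ((q + 1) / q) ≥ ψ θ * θ ∧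
      (((s * (1 - s) / (q * (q - s))) ^ (s / (q - s)) +
          (s * (1 - s) / (q * (q - s))) ^ (q / (q - s))) * μ ^ (q / (q - s)) ≤ |θ| →
        ψ θ * θ ≥ (1 + q * (q - s) / (s * (1 - s))) ^ (-(1 / q)) * |θ| ^ ((q + 1) / q)) ∧
      (|θ| ≤ ((s * (1 - s) / (q * (q - s))) ^ (s / (q - s)) +
          (s * (1 - s) / (q * (q - s))) ^ (q / (q - s))) * μ ^ (q / (q - s)) →
        ψ θ * θ ≥ μ ^ (-(1 / s)) * (1 + s * (1 - s) / (q * (q - s))) ^ (-(1 / s)) *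
          |θ| ^ ((s + 1) / s)) := by
  intro θ
  have hq₀ : 0 < q := by linarith
  have hsq : s < q := by linarith
  have hθ : |θ| = μ * |ψ θ| ^ s + |ψ θ| ^ q := by
    rw [← abs_g hs hq₀ hμ.le, hψ_right]
  have hψθ : ψ θ * θ = |ψ θ| * |θ| := by
    have := mul_g_eq_abs_mul_abs (s := s) (q := q) hμ.le (ψ θ)
    rwa [hψ_right] at this
  set A := s * (1 - s) / (q * (q - s))
  have hA : 0 < A := by unfold A; apply div_pos <;> nlinarith
  have hAinv : q * (q - s) / (s * (1 - s)) = A⁻¹ := (inv_div _ _).symm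
  set ζ := |ψ θ|
  have hζ : 0 ≤ ζ := abs_nonneg _
  simp only [one_div, ge_iff_le, hψθ, hAinv]
  refine ⟨mul_le_rpow_of_rpow_le hq₀ hζ ?_, fun h => ?_, fun h => ?_⟩
  · rw [hθ]
    exact le_add_of_nonneg_left (by positivity)
  · have hcross := mul_mul_rpow_le_rpow_of_threshold_le hs hsq hA hμ hζ (hθ ▸ h)
    refine rpow_mul_le_mul_of_le_mul_rpow hq₀ (by positivity) hζ (abs_nonneg θ) ?_
    have : μ * ζ ^ s ≤ A⁻¹ * ζ ^ q := by rwa [le_inv_mul_iff₀ hA, ← mul_assoc]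
    rw [hθ]
    linarith
  · have hcross := rpow_le_mul_mul_rpow_of_le_threshold hs hsq hA hμ hζ (hθ ▸ h)
    rw [← Real.mul_rpow hμ.le (by positivity)]
    refine rpow_mul_le_mul_of_le_mul_rpow hs (by positivity) hζ (abs_nonneg θ) ?_
    rw [hθ]
    linarith

theorem stmt_14 (s q : ℝ) (hs : 0 < s) (hs1 : s < 1) (hq : 1 < q)
    (μ : ℝ) (hμ : 0 < μ)
    (ψ : ℝ → ℝ)
    (hψ_right : ∀ θ : ℝ, g s q μ (ψ θ) = θ)
    (hψ_left : ∀ ζ : ℝ, ψ (g s q μ ζ) = ζ) :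
    ∀ θ : ℝ,
      |θ| ^ ((q + 1) / q) ≥ ψ θ * θ ∧
      (((s * (1 - s) / (q * (q - s))) ^ (s / (q - s)) +
          (s * (1 - s) / (q * (q - s))) ^ (q / (q - s))) * μ ^ (q / (q - s)) ≤ |θ| →
        ψ θ * θ ≥ (1 + q * (q - s) / (s * (1 - s))) ^ (-(1 / q)) * |θ| ^ ((q + 1) / q)) ∧
      (|θ| ≤ ((s * (1 - s) / (q * (q - s))) ^ (s / (q - s)) +
          (s * (1 - s) / (q * (q - s))) ^ (q / (q - s))) * μ ^ (q / (q - s)) →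
        ψ θ * θ ≥ μ ^ (-(1 / s)) * (1 + s * (1 - s) / (q * (q - s))) ^ (-(1 / s)) *
          |θ| ^ ((s + 1) / s)) :=
  stmt_14_general s q hs hs1 hq μ hμ ψ hψ_right
end

section
/- Assume in addition 0 < s < 1. Then there exists a constant C > 0 depending only on s and q such that for every μ ≥ 0 and all θ₁, θ₂ ∈ ℝ with θ₁ ≠ θ₂ one has (ψ_μ(θ₁) − ψ_μ(θ₂))·(θ₁ − θ₂) ≥ C·|θ₁ − θ₂|^((s+1)/s) / (μ^(1/s) + |ψ_μ(θ₁)|^((q−s)/s) + |ψ_μ(θ₂)|^((q−s)/s)). -/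
/-!
Put `a = ψ_μ(θ₁)` and `b = ψ_μ(θ₂)`. As `g_μ` is monotone, the left-hand side equals
`|a - b| |g_μ(a) - g_μ(b)|`. For `s ≤ p` the signed power `ζ ↦ |ζ|^(p-1) ζ` obeys the local Hölder
bound `(2p/s) |a - b|^s (|a|^(p-s) + |b|^(p-s))` on its increments; with `p = s` and `p = q` this
gives `|θ₁ - θ₂| ≤ (8q/s) (|a - b| D)^s`, `D` being the denominator of the claim. Taking `s`-th
roots and multiplying by `|θ₁ - θ₂|` gives the inequality with `C = (8q/s)^(-1/s)`.
-/

open Real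

noncomputable def signedRpow (p x : ℝ) : ℝ := |x| ^ (p - 1) * x

lemma signedRpow_of_nonneg {p x : ℝ} (hp : 0 < p) (hx : 0 ≤ x) : signedRpow p x = x ^ p := by
  rcases hx.eq_or_lt with rfl | hx
  · simp [signedRpow, zero_rpow hp.ne']
  · rw [signedRpow, abs_of_pos hx, ← rpow_add_one hx.ne', sub_add_cancel]

lemma signedRpow_neg (p x : ℝ) : signedRpow p (-x) = -signedRpow p x := by
  simp only [signedRpow, abs_neg, mul_neg]

lemma signedRpow_of_nonpos {p x : ℝ} (hp : 0 < p) (hx : x ≤ 0) : signedRpow p x = -(-x) ^ p := by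
  rw [← signedRpow_of_nonneg hp (neg_nonneg.2 hx), signedRpow_neg, neg_neg]

lemma signedRpow_monotone {p : ℝ} (hp : 0 < p) : Monotone (signedRpow p) := by
  have hnonneg : ∀ x, 0 ≤ x → 0 ≤ signedRpow p x := fun x hx ↦ by
    rw [signedRpow_of_nonneg hp hx]; positivity
  have hpos : ∀ x y, 0 ≤ x → x ≤ y → signedRpow p x ≤ signedRpow p y := fun x y hx hxy ↦ by
    rw [signedRpow_of_nonneg hp hx, signedRpow_of_nonneg hp (hx.trans hxy)]
    exact rpow_le_rpow hx hxy hp.le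
  intro x y hxy
  rcases le_total 0 x with hx | hx
  · exact hpos x y hx hxy
  rcases le_total 0 y with hy | hy
  · have := hnonneg (-x) (neg_nonneg.2 hx)
    rw [signedRpow_neg] at this
    linarith [hnonneg y hy]
  · have := hpos (-y) (-x) (neg_nonneg.2 hy) (neg_le_neg hxy)
    rwa [signedRpow_neg, signedRpow_neg, neg_le_neg_iff] at this

lemma rpow_sub_rpow_le_mul_sub {r x y : ℝ} (hr : 1 ≤ r) (hy : 0 ≤ y) (hyx : y ≤ x) :
    x ^ r - y ^ r ≤ r * x ^ (r - 1) * (x - y) := by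
  rcases (hy.trans hyx).eq_or_lt with rfl | hx
  · simp [le_antisymm hyx hy]
  have h := one_add_mul_self_le_rpow_one_add (s := y / x - 1)
    (by linarith [div_nonneg hy hx.le]) hr
  rw [add_sub_cancel, div_rpow hy hx.le, le_div_iff₀ (rpow_pos_of_pos hx r)] at h
  have hxr : x ^ r = x ^ (r - 1) * x := by rw [← rpow_add_one hx.ne', sub_add_cancel]
  rw [hxr] at h ⊢
  have hlin : (1 + r * (y / x - 1)) * (x ^ (r - 1) * x) =
      x ^ (r - 1) * x - r * x ^ (r - 1) * (x - y) := by
    field_simp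
    ring
  linarith

lemma rpow_sub_rpow_le_of_le {s p a b : ℝ} (hs : 0 < s) (hs1 : s ≤ 1) (hsp : s ≤ p)
    (hb : 0 ≤ b) (hba : b ≤ a) : a ^ p - b ^ p ≤ p / s * a ^ (p - s) * (a - b) ^ s := by
  have ha := hb.trans hba
  have hpow : ∀ x e : ℝ, 0 ≤ x → (x ^ s) ^ (e / s) = x ^ e := fun x e hx ↦ by
    rw [← rpow_mul hx, mul_div_cancel₀ _ hs.ne']
  have hsub : a ^ s - b ^ s ≤ (a - b) ^ s := by
    have := rpow_add_le_add_rpow (sub_nonneg.2 hba) hb hs.le hs1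
    rw [sub_add_cancel] at this
    linarith
  -- substituting `x = a ^ s` turns the exponent `p / s ≥ 1` into a convex power
  calc a ^ p - b ^ p = (a ^ s) ^ (p / s) - (b ^ s) ^ (p / s) := by rw [hpow a p ha, hpow b p hb]
    _ ≤ p / s * (a ^ s) ^ (p / s - 1) * (a ^ s - b ^ s) :=
      rpow_sub_rpow_le_mul_sub ((one_le_div hs).2 hsp) (rpow_nonneg hb s)
        (rpow_le_rpow hb hba hs.le)
    _ = p / s * a ^ (p - s) * (a ^ s - b ^ s) := by
      rw [← hpow a (p - s) ha, sub_div, div_self hs.ne']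
    _ ≤ p / s * a ^ (p - s) * (a - b) ^ s := by
      gcongr
      exact mul_nonneg (div_nonneg (hs.le.trans hsp) hs.le) (rpow_nonneg ha _)

lemma rpow_add_rpow_le_of_neg_le {s p a b : ℝ} (hs : 0 < s) (hsp : s ≤ p) (hb : b ≤ 0)
    (hba : -b ≤ a) : a ^ p + (-b) ^ p ≤ 2 * a ^ (p - s) * (a - b) ^ s := by
  have ha : 0 ≤ a := (neg_nonneg.2 hb).trans hba
  have h1 : (-b) ^ p ≤ a ^ p := rpow_le_rpow (neg_nonneg.2 hb) hba (hs.trans_le hsp).le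
  have h2 : a ^ p ≤ a ^ (p - s) * (a - b) ^ s := by
    calc a ^ p = a ^ (p - s) * a ^ s := by
          rw [← rpow_add' ha (by linarith [hs.trans_le hsp]), sub_add_cancel]
      _ ≤ a ^ (p - s) * (a - b) ^ s := by gcongr; linarith
  linarith

lemma signedRpow_sub_le_of_abs_le {s p a b : ℝ} (hs : 0 < s) (hs1 : s ≤ 1) (hsp : s ≤ p)
    (hba : |b| ≤ a) :
    signedRpow p a - signedRpow p b ≤
      2 * p / s * |a - b| ^ s * (|a| ^ (p - s) + |b| ^ (p - s)) := by
  have hp : 0 < p := hs.trans_le hsp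
  have ha : 0 ≤ a := (abs_nonneg b).trans hba
  have hps : 1 ≤ p / s := (one_le_div hs).2 hsp
  rw [abs_of_nonneg ha, abs_of_nonneg (sub_nonneg.2 ((le_abs_self b).trans hba)),
    signedRpow_of_nonneg hp ha]
  have hA : 0 ≤ a ^ (p - s) := rpow_nonneg ha _
  have hB : 0 ≤ |b| ^ (p - s) := rpow_nonneg (abs_nonneg b) _
  have hD : 0 ≤ (a - b) ^ s := rpow_nonneg (by linarith [le_abs_self b]) _
  rcases le_total 0 b with hb | hb
  · rw [signedRpow_of_nonneg hp hb]
    have := rpow_sub_rpow_le_of_le hs hs1 hsp hb ((le_abs_self b).trans hba)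
    have hrest : 0 ≤ p / s * (a - b) ^ s * (a ^ (p - s) + 2 * |b| ^ (p - s)) := by positivity
    linear_combination this + hrest
  · rw [signedRpow_of_nonpos hp hb, sub_neg_eq_add]
    have := rpow_add_rpow_le_of_neg_le hs hsp hb ((neg_le_abs b).trans hba)
    have hA' : 0 ≤ (p / s - 1) * ((a - b) ^ s * a ^ (p - s)) := by
      have := sub_nonneg.2 hps; positivity
    have hB' : 0 ≤ p / s * ((a - b) ^ s * |b| ^ (p - s)) := by positivity
    linear_combination this + 2 * hA' + 2 * hB'

lemma abs_sub_le_of_odd_of_monotone {f : ℝ → ℝ} {R : ℝ → ℝ → ℝ} (hf : Monotone f)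
    (hf_neg : ∀ x, f (-x) = -f x) (hR_comm : ∀ a b, R a b = R b a)
    (hR_neg : ∀ a b, R (-a) (-b) = R a b) (hR : ∀ a b, |b| ≤ a → f a - f b ≤ R a b)
    (a b : ℝ) : |f a - f b| ≤ R a b := by
  have hle : ∀ a b, b ≤ a → f a - f b ≤ R a b := by
    intro a b hba
    by_cases hab : |b| ≤ a
    · exact hR a b hab
    -- otherwise `b < 0` and the pair `(-b, -a)` is ordered
    have hb : b < 0 := by
      by_contra! hb
      exact hab (by rwa [abs_of_nonneg hb])
    rw [not_le, abs_of_neg hb] at hab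
    have := hR (-b) (-a) (abs_le.2 ⟨by linarith, by linarith⟩)
    rw [hf_neg, hf_neg, hR_neg, hR_comm] at this
    linarith
  rcases le_total b a with hba | hab
  · rw [abs_of_nonneg (sub_nonneg.2 (hf hba))]
    exact hle a b hba
  · rw [abs_sub_comm, abs_of_nonneg (sub_nonneg.2 (hf hab)), hR_comm]
    exact hle b a hab

lemma abs_signedRpow_sub_le {s p : ℝ} (hs : 0 < s) (hs1 : s ≤ 1) (hsp : s ≤ p) (a b : ℝ) :
    |signedRpow p a - signedRpow p b| ≤
      2 * p / s * |a - b| ^ s * (|a| ^ (p - s) + |b| ^ (p - s)) := by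
  refine abs_sub_le_of_odd_of_monotone (signedRpow_monotone (hs.trans_le hsp))
    (signedRpow_neg p) (fun a b ↦ ?_) (fun a b ↦ ?_)
    (fun a b ↦ signedRpow_sub_le_of_abs_le hs hs1 hsp) a b
  · rw [abs_sub_comm, add_comm]
  · rw [abs_neg, abs_neg, ← neg_sub', abs_neg]

lemma sub_mul_sub_eq_abs_mul_abs_of_monotone {f : ℝ → ℝ} (hf : Monotone f) (a b : ℝ) :
    (a - b) * (f a - f b) = |a - b| * |f a - f b| := by
  rw [← abs_mul, abs_of_nonneg]
  rcases le_total b a with h | h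
  · exact mul_nonneg (sub_nonneg.2 h) (sub_nonneg.2 (hf h))
  · exact mul_nonneg_of_nonpos_of_nonpos (sub_nonpos.2 h) (sub_nonpos.2 (hf h))

lemma rpow_le_rpow_of_rpow_div_le {s e x D : ℝ} (hs : 0 < s) (hx : 0 ≤ x) (h : x ^ (e / s) ≤ D) :
    x ^ e ≤ D ^ s :=
  calc x ^ e = (x ^ (e / s)) ^ s := by rw [← rpow_mul hx, div_mul_cancel₀ _ hs.ne']
    _ ≤ D ^ s := rpow_le_rpow (rpow_nonneg hx _) h hs.le

lemma two_mul_add_rpow_add_rpow_le {s e μ x y : ℝ} (hs : 0 < s) (hμ : 0 ≤ μ) (hx : 0 ≤ x)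
    (hy : 0 ≤ y) : 2 * μ + x ^ e + y ^ e ≤ 4 * (μ ^ (1 / s) + x ^ (e / s) + y ^ (e / s)) ^ s := by
  set D := μ ^ (1 / s) + x ^ (e / s) + y ^ (e / s) with hD_def
  have hM : 0 ≤ μ ^ (1 / s) := by positivity
  have hX : 0 ≤ x ^ (e / s) := by positivity
  have hY : 0 ≤ y ^ (e / s) := by positivity
  have hμD : μ ≤ D ^ s := by
    simpa using rpow_le_rpow_of_rpow_div_le (e := 1) (D := D) hs hμ (by linarith)
  have hxD := rpow_le_rpow_of_rpow_div_le (e := e) (D := D) hs hx (by linarith)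
  have hyD := rpow_le_rpow_of_rpow_div_le (e := e) (D := D) hs hy (by linarith)
  linarith

lemma rpow_div_le_of_le_mul_rpow {s K x y D : ℝ} (hs : 0 < s) (hK : 0 < K) (hx : 0 ≤ x)
    (hy : 0 ≤ y) (hD : 0 ≤ D) (h : x ≤ K * (y * D) ^ s) :
    (K ^ (1 / s))⁻¹ * x ^ ((s + 1) / s) / D ≤ y * x := by
  have hroot : x ^ (1 / s) ≤ K ^ (1 / s) * (y * D) := by
    calc x ^ (1 / s) ≤ (K * (y * D) ^ s) ^ (1 / s) := by gcongr
      _ = K ^ (1 / s) * (y * D) := by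
        rw [mul_rpow hK.le (by positivity), ← rpow_mul (by positivity), mul_one_div_cancel hs.ne',
          rpow_one]
  have hsplit : x ^ ((s + 1) / s) = x * x ^ (1 / s) := by
    rw [add_div, div_self hs.ne', rpow_add' hx (by positivity), rpow_one]
  refine div_le_of_le_mul₀ hD (by positivity) ?_
  rw [hsplit, inv_mul_le_iff₀ (by positivity)]
  calc x * x ^ (1 / s) ≤ x * (K ^ (1 / s) * (y * D)) := by gcongr
    _ = K ^ (1 / s) * (y * x * D) := by ring

lemma g_eq_add_signedRpow (s q μ ζ : ℝ) : g s q μ ζ = μ * signedRpow s ζ + signedRpow q ζ := by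
  simp only [g, signedRpow]
  ring

lemma g_monotone {s q μ : ℝ} (hs : 0 < s) (hq : 0 < q) (hμ : 0 ≤ μ) : Monotone (g s q μ) := by
  rw [show g s q μ = _ from funext (g_eq_add_signedRpow s q μ)]
  exact ((signedRpow_monotone hs).const_mul hμ).add (signedRpow_monotone hq)

lemma abs_g_sub_le {s q μ : ℝ} (hs : 0 < s) (hs1 : s ≤ 1) (hsq : s ≤ q) (hμ : 0 ≤ μ) (a b : ℝ) :
    |g s q μ a - g s q μ b| ≤
      2 * q / s * |a - b| ^ s * (2 * μ + |a| ^ (q - s) + |b| ^ (q - s)) := by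
  have hS := abs_signedRpow_sub_le hs hs1 le_rfl a b
  rw [sub_self, rpow_zero, rpow_zero, mul_div_assoc, div_self hs.ne'] at hS
  have hQ := abs_signedRpow_sub_le hs hs1 hsq a b
  have hqs : 0 ≤ (q / s - 1) * (μ * |a - b| ^ s) := by
    have := sub_nonneg.2 ((one_le_div hs).2 hsq); positivity
  calc |g s q μ a - g s q μ b|
      = |μ * (signedRpow s a - signedRpow s b) + (signedRpow q a - signedRpow q b)| := by
        rw [g_eq_add_signedRpow, g_eq_add_signedRpow]; ring_nf
    _ ≤ μ * |signedRpow s a - signedRpow s b| + |signedRpow q a - signedRpow q b| := by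
        grw [abs_add_le, abs_mul, abs_of_nonneg hμ]
    _ ≤ μ * (2 * 1 * |a - b| ^ s * (1 + 1)) +
        2 * q / s * |a - b| ^ s * (|a| ^ (q - s) + |b| ^ (q - s)) := by gcongr
    _ ≤ 2 * q / s * |a - b| ^ s * (2 * μ + |a| ^ (q - s) + |b| ^ (q - s)) := by
        linear_combination 4 * hqs

theorem stmt_17_general (s q : ℝ) (hs : 0 < s) (hs1 : s < 1) (hsq : s < q)
    (ψ : ℝ → ℝ → ℝ)
    (hψ_right : ∀ μ : ℝ, 0 ≤ μ → ∀ θ : ℝ, g s q μ (ψ μ θ) = θ) :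
    ∃ C : ℝ, 0 < C ∧ ∀ μ : ℝ, 0 ≤ μ → ∀ θ₁ θ₂ : ℝ, θ₁ ≠ θ₂ →
      (ψ μ θ₁ - ψ μ θ₂) * (θ₁ - θ₂) ≥
        C * |θ₁ - θ₂| ^ ((s + 1) / s) /
          (μ ^ (1 / s) + |ψ μ θ₁| ^ ((q - s) / s) + |ψ μ θ₂| ^ ((q - s) / s)) := by
  have hq : 0 < q := hs.trans hsq
  have hK : 0 < 8 * q / s := by positivity
  refine ⟨((8 * q / s) ^ (1 / s))⁻¹, by positivity, fun μ hμ θ₁ θ₂ _ ↦ ?_⟩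
  have h₁ := hψ_right μ hμ θ₁
  have h₂ := hψ_right μ hμ θ₂
  generalize ψ μ θ₁ = a at h₁ ⊢
  generalize ψ μ θ₂ = b at h₂ ⊢
  subst h₁ h₂
  have hbound : |g s q μ a - g s q μ b| ≤
      8 * q / s * (|a - b| * (μ ^ (1 / s) + |a| ^ ((q - s) / s) + |b| ^ ((q - s) / s))) ^ s :=
    calc _ ≤ 2 * q / s * |a - b| ^ s * (2 * μ + |a| ^ (q - s) + |b| ^ (q - s)) :=
          abs_g_sub_le hs hs1.le hsq.le hμ a b
      _ ≤ 2 * q / s * |a - b| ^ s *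
          (4 * (μ ^ (1 / s) + |a| ^ ((q - s) / s) + |b| ^ ((q - s) / s)) ^ s) := by
          gcongr
          exact two_mul_add_rpow_add_rpow_le hs hμ (abs_nonneg a) (abs_nonneg b)
      _ = _ := by rw [mul_rpow (abs_nonneg _) (by positivity)]; ring
  rw [ge_iff_le, sub_mul_sub_eq_abs_mul_abs_of_monotone (g_monotone hs hq hμ)]
  exact rpow_div_le_of_le_mul_rpow hs hK (abs_nonneg _) (abs_nonneg _) (by positivity) hbound

theorem stmt_17 (s q : ℝ) (hs : 0 < s) (hs1 : s < 1) (hsq : s < q)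
    (ψ : ℝ → ℝ → ℝ)
    (hψ_right : ∀ μ : ℝ, 0 ≤ μ → ∀ θ : ℝ, g s q μ (ψ μ θ) = θ)
    (hψ_left : ∀ μ : ℝ, 0 ≤ μ → ∀ ζ : ℝ, ψ μ (g s q μ ζ) = ζ) :
    ∃ C : ℝ, 0 < C ∧ ∀ μ : ℝ, 0 ≤ μ → ∀ θ₁ θ₂ : ℝ, θ₁ ≠ θ₂ →
      (ψ μ θ₁ - ψ μ θ₂) * (θ₁ - θ₂) ≥
        C * |θ₁ - θ₂| ^ ((s + 1) / s) /
          (μ ^ (1 / s) + |ψ μ θ₁| ^ ((q - s) / s) + |ψ μ θ₂| ^ ((q - s) / s)) :=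
  stmt_17_general s q hs hs1 hsq ψ hψ_right
end
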